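/- arXiv:2304.12363 — 4 statements merged into one kernel-verified Lean document; each statement's English description precedes it below -/
import Mathlib

section
/- Fix an integer d ≥ 2. There exists a constant c > 0, depending only on d, with the following property: for all natural numbers n, n₁, n₂, n₃ satisfying n₁ ≥ n₃ and max(n₁ − n₂ − n₃, n₂ − n₁ − n₃, 0) ≤ n ≤ n₁ + n₂ + n₃, if one sets H := n(n + d − 1) − n₁(n₁ + d − 1) + n₂(n₂ + d − 1) − n₃(n₃ + d − 1) (an integer), then at least one of the following holds: (1) n = n₁; (2) ⟨n₁⟩·⟨n₂⟩·⟨n₃⟩ ≥ c · n^{3/2}; (3) |H| ≥ c · max(n₁, n₂) · |n − n₁|. -/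
private lemma jb_ge_one (x : ℝ) : 1 ≤ Real.sqrt (1 + x ^ 2) := by
  have h : (1:ℝ) ≤ 1 + x ^ 2 := by nlinarith [sq_nonneg x]
  calc (1:ℝ) = Real.sqrt 1 := Real.sqrt_one.symm
    _ ≤ _ := Real.sqrt_le_sqrt h

private lemma jb_ge_self {x : ℝ} (hx : 0 ≤ x) : x ≤ Real.sqrt (1 + x ^ 2) := by
  have h : x ^ 2 ≤ 1 + x ^ 2 := by nlinarith
  calc x = Real.sqrt (x ^ 2) := (Real.sqrt_sq hx).symm
    _ ≤ _ := Real.sqrt_le_sqrt h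

private lemma rpow_3half {x : ℝ} (hx : 0 ≤ x) : x ^ ((3:ℝ)/2) = x * Real.sqrt x := by
  rcases eq_or_lt_of_le hx with h | h
  · rw [← h]
    simp [Real.zero_rpow (by norm_num : (3:ℝ)/2 ≠ 0)]
  · rw [show (3:ℝ)/2 = 1 + 1/2 by norm_num, Real.rpow_add h, Real.rpow_one,
      Real.sqrt_eq_rpow]

private lemma iz1 (D N A M K T : ℤ) (hD : 2 ≤ D) (hM : M ≤ 3*(N+A+D-1)) (hm : 0 ≤ N-A)
    (hT : (N-A)*(N+A+D-1) ≤ T) (hTK : T ≤ K) (hK0 : 0 ≤ K) : M*(N-A) ≤ 6*(D+1)*K := by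
  nlinarith [mul_le_mul_of_nonneg_right hM hm,
    mul_nonneg (show (0:ℤ) ≤ D by linarith) hK0]

private lemma iz2 (D N A B C K H : ℤ) (hD : 2 ≤ D) (hB0 : 0 ≤ B) (hBC : B < C)
    (hAN : A < N) (hA0 : 0 ≤ A)
    (hid : H = (N-A)*(N+A+D-1) + (B-C)*(B+C+D-1))
    (hHK : H ≤ K) (hK0 : 0 ≤ K) (hkey : 6*(D+1)*K < A*(N-A)) : N < (D+1)*C^2 := by
  nlinarith [hid, mul_nonneg (show (0:ℤ) ≤ D by linarith) hK0,
    mul_nonneg (show (0:ℤ) ≤ N-A-1 by linarith) (show (0:ℤ) ≤ N+D-1 by linarith),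
    mul_nonneg (show (0:ℤ) ≤ D-1 by linarith)
      (mul_nonneg (show (0:ℤ) ≤ C-1 by linarith) (show (0:ℤ) ≤ C by linarith)),
    sq_nonneg B, sq_nonneg C, mul_nonneg (show (0:ℤ) ≤ D-1 by linarith) hB0]

private lemma iz4 (D N A B C M K H : ℤ) (hD : 2 ≤ D) (hC0 : 0 ≤ C) (hCB : C < B)
    (hNA : N < A) (hN0 : 0 ≤ N)
    (hid : H = (N-A)*(N+A+D-1) + (B-C)*(B+C+D-1))
    (hHK : -K ≤ H) (hK0 : 0 ≤ K) (hM3 : M ≤ 3*A) (hkey : 6*(D+1)*K < M*(A-N)) :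
    N < 2*(D+1)*B^2 := by
  nlinarith [hid, mul_nonneg (show (0:ℤ) ≤ D by linarith) hK0,
    mul_le_mul_of_nonneg_right hM3 (show (0:ℤ) ≤ A-N by linarith),
    mul_nonneg (show (0:ℤ) ≤ A-N-1 by linarith) (show (0:ℤ) ≤ 2*N+A+2*D-2 by linarith),
    mul_nonneg (show (0:ℤ) ≤ D-1 by linarith)
      (mul_nonneg (show (0:ℤ) ≤ B-1 by linarith) (show (0:ℤ) ≤ B by linarith)),
    sq_nonneg C, sq_nonneg B, mul_nonneg (show (0:ℤ) ≤ D-1 by linarith) hC0]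

set_option maxHeartbeats 1000000 in
theorem stmt_1 (d : ℕ) (hd : 2 ≤ d) :
    ∃ c : ℝ, 0 < c ∧
      ∀ n n₁ n₂ n₃ : ℕ, n₃ ≤ n₁ →
        max ((n₁ : ℤ) - n₂ - n₃) (max ((n₂ : ℤ) - n₁ - n₃) 0) ≤ (n : ℤ) →
        (n : ℤ) ≤ (n₁ : ℤ) + n₂ + n₃ →
        n = n₁ ∨
        c * (n : ℝ) ^ ((3 : ℝ) / 2) ≤
          Real.sqrt (1 + (n₁ : ℝ) ^ 2) * Real.sqrt (1 + (n₂ : ℝ) ^ 2) *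
            Real.sqrt (1 + (n₃ : ℝ) ^ 2) ∨
        c * (max n₁ n₂ : ℕ) * |(n : ℝ) - (n₁ : ℝ)| ≤
          |(((n : ℤ) * ((n : ℤ) + d - 1) - (n₁ : ℤ) * ((n₁ : ℤ) + d - 1) +
              (n₂ : ℤ) * ((n₂ : ℤ) + d - 1) - (n₃ : ℤ) * ((n₃ : ℤ) + d - 1) : ℤ) : ℝ)| := by
  have hd6 : (0:ℝ) < 6 * ((d:ℝ) + 1) := by positivity
  refine ⟨1 / (6 * ((d:ℝ) + 1)), by positivity, ?_⟩
  intro n n₁ n₂ n₃ h31 hlow hhigh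
  simp only [max_le_iff] at hlow
  obtain ⟨hl1, hl2, -⟩ := hlow
  by_cases hne : n = n₁
  · exact Or.inl hne
  by_cases hn0 : n = 0
  · subst hn0
    refine Or.inr (Or.inl ?_)
    rw [Nat.cast_zero, Real.zero_rpow (by norm_num : (3:ℝ)/2 ≠ 0), mul_zero]
    positivity
  set H : ℤ := (n : ℤ) * ((n : ℤ) + d - 1) - (n₁ : ℤ) * ((n₁ : ℤ) + d - 1) +
      (n₂ : ℤ) * ((n₂ : ℤ) + d - 1) - (n₃ : ℤ) * ((n₃ : ℤ) + d - 1) with hHdef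
  have hid : H = ((n:ℤ) - n₁) * ((n:ℤ) + n₁ + (d:ℤ) - 1)
      + ((n₂:ℤ) - n₃) * ((n₂:ℤ) + n₃ + (d:ℤ) - 1) := by rw [hHdef]; ring
  have hd2 : (2:ℤ) ≤ (d:ℤ) := by exact_mod_cast hd
  have h31' : (n₃:ℤ) ≤ (n₁:ℤ) := by exact_mod_cast h31
  have habs1 : H ≤ |H| := le_abs_self H
  have habs2 : -H ≤ |H| := neg_le_abs H
  have habs0 : 0 ≤ |H| := abs_nonneg H
  have hn2n : (0:ℤ) ≤ (n₂:ℤ) := Int.ofNat_nonneg n₂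
  have hn3n : (0:ℤ) ≤ (n₃:ℤ) := Int.ofNat_nonneg n₃
  have hn1n : (0:ℤ) ≤ (n₁:ℤ) := Int.ofNat_nonneg n₁
  have hnnZ : (0:ℤ) ≤ (n:ℤ) := Int.ofNat_nonneg n
  have hmcast : ((max n₁ n₂ : ℕ):ℤ) = max ((n₁:ℤ)) ((n₂:ℤ)) := by
    simp [Nat.cast_max]
  -- helper to conclude the third alternative from an integer inequality
  have finish3 : (((max n₁ n₂ : ℕ):ℤ) * |(n:ℤ) - (n₁:ℤ)| ≤ 6*((d:ℤ)+1)*|H|) →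
      (1 / (6 * ((d:ℝ) + 1)) * (max n₁ n₂ : ℕ) * |(n : ℝ) - (n₁ : ℝ)| ≤ |(H:ℝ)|) := by
    intro key
    have keyR : ((max n₁ n₂ : ℕ):ℝ) * |(n:ℝ) - (n₁:ℝ)| ≤ 6*((d:ℝ)+1)*|(H:ℝ)| := by
      exact_mod_cast key
    rw [div_mul_eq_mul_div, div_mul_eq_mul_div, div_le_iff₀ hd6]
    linarith [keyR]
  -- basic real facts
  set s1 := Real.sqrt (1 + (n₁ : ℝ) ^ 2) with hs1def
  set s2 := Real.sqrt (1 + (n₂ : ℝ) ^ 2) with hs2def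
  set s3 := Real.sqrt (1 + (n₃ : ℝ) ^ 2) with hs3def
  have hs1 : (n₁:ℝ) ≤ s1 := jb_ge_self (Nat.cast_nonneg _)
  have hs2 : (n₂:ℝ) ≤ s2 := jb_ge_self (Nat.cast_nonneg _)
  have hs3 : (n₃:ℝ) ≤ s3 := jb_ge_self (Nat.cast_nonneg _)
  have hs1' : (1:ℝ) ≤ s1 := jb_ge_one _
  have hs2' : (1:ℝ) ≤ s2 := jb_ge_one _
  have hs3' : (1:ℝ) ≤ s3 := jb_ge_one _
  have hnn : (0:ℝ) ≤ (n:ℝ) := Nat.cast_nonneg _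
  have hsqn : (0:ℝ) ≤ Real.sqrt (n:ℝ) := Real.sqrt_nonneg _
  rcases lt_trichotomy n n₁ with hc | hc | hc
  · -- n < n₁
    have hcZ : (n:ℤ) < (n₁:ℤ) := by exact_mod_cast hc
    have habsm : |(n:ℤ) - (n₁:ℤ)| = (n₁:ℤ) - n := by
      rw [abs_sub_comm]; exact abs_of_pos (by linarith)
    rcases le_or_gt n₂ n₃ with h23 | h23
    · -- both terms of -H nonneg : alternative 3
      have h23' : (n₂:ℤ) ≤ (n₃:ℤ) := by exact_mod_cast h23
      refine Or.inr (Or.inr (finish3 ?_))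
      rw [habsm]
      have e1 : 0 ≤ ((n₃:ℤ) - n₂) * ((n₂:ℤ) + n₃ + d - 1) :=
        mul_nonneg (by linarith) (by linarith)
      have e2 : ((n₁:ℤ) - n) * ((n₁:ℤ) + n + (d:ℤ) - 1) ≤ -H := by
        rw [hid]; nlinarith [e1]
      refine iz1 (d:ℤ) (n₁:ℤ) (n:ℤ) _ _ (-H) hd2 ?_ (by linarith) e2 habs2 habs0
      rw [hmcast]
      exact max_le (by linarith) (by linarith)
    · -- n₂ > n₃ : cancellation possible
      have h23' : (n₃:ℤ) < (n₂:ℤ) := by exact_mod_cast h23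
      by_cases hkey : ((max n₁ n₂ : ℕ):ℤ) * ((n₁:ℤ) - n) ≤ 6*((d:ℤ)+1)*|H|
      · refine Or.inr (Or.inr (finish3 ?_))
        rw [habsm]; exact hkey
      · refine Or.inr (Or.inl ?_)
        push_neg at hkey
        have hmax3 : ((max n₁ n₂ : ℕ):ℤ) ≤ 3 * (n₁:ℤ) := by
          rw [hmcast]
          exact max_le (by linarith) (by linarith)
        have hkey2 : (n:ℤ) < 2*((d:ℤ)+1) * (n₂:ℤ)^2 :=
          iz4 (d:ℤ) (n:ℤ) (n₁:ℤ) (n₂:ℤ) (n₃:ℤ) _ (|H|) H hd2 hn3n h23' hcZ hnnZ hid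
            (neg_abs_le H) habs0 hmax3 hkey
        -- real part
        have hq : Real.sqrt (n:ℝ) ≤ 2*((d:ℝ)+1) * (n₂:ℝ) := by
          have h2 : (n:ℝ) < 2*((d:ℝ)+1) * (n₂:ℝ)^2 := by exact_mod_cast hkey2
          have h1 : (n:ℝ) ≤ (2*((d:ℝ)+1) * (n₂:ℝ))^2 := by
            nlinarith [sq_nonneg ((n₂:ℝ)), Nat.cast_nonneg (α := ℝ) d,
              mul_nonneg (Nat.cast_nonneg (α := ℝ) d) (sq_nonneg ((n₂:ℝ)))]
          calc Real.sqrt (n:ℝ) ≤ Real.sqrt ((2*((d:ℝ)+1) * (n₂:ℝ))^2) := Real.sqrt_le_sqrt h1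
            _ = 2*((d:ℝ)+1) * (n₂:ℝ) := Real.sqrt_sq (by positivity)
        have hn1R : (n:ℝ) ≤ (n₁:ℝ) := by exact_mod_cast hc.le
        rw [rpow_3half hnn, div_mul_eq_mul_div, div_le_iff₀ hd6]
        have c1 : (n:ℝ) * Real.sqrt (n:ℝ) ≤ (n:ℝ) * (2*((d:ℝ)+1) * (n₂:ℝ)) :=
          mul_le_mul_of_nonneg_left hq hnn
        have c2 : (n:ℝ) * (2*((d:ℝ)+1) * (n₂:ℝ)) ≤ s1 * (2*((d:ℝ)+1) * s2) := by
          have := mul_le_mul (le_trans hn1R hs1)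
            (mul_le_mul_of_nonneg_left hs2 (by positivity))
            (by positivity) (by linarith)
          linarith [this]
        have c3 : s1 * (2*((d:ℝ)+1) * s2) ≤ s1 * s2 * s3 * (6 * ((d:ℝ)+1)) := by
          have t2 : 0 ≤ s1 * s2 * ((d:ℝ)+1) := by
            apply mul_nonneg (mul_nonneg (by linarith) (by linarith)) (by positivity)
          have t1 : 0 ≤ s1 * s2 * ((d:ℝ)+1) * (s3 - 1) :=
            mul_nonneg t2 (by linarith)
          nlinarith [t1, t2]
        linarith [c1, c2, c3]
  · exact absurd hc hne
  · -- n₁ < n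
    have hcZ : (n₁:ℤ) < (n:ℤ) := by exact_mod_cast hc
    have habsm : |(n:ℤ) - (n₁:ℤ)| = (n:ℤ) - n₁ := abs_of_pos (by linarith)
    rcases le_or_gt n₃ n₂ with h23 | h23
    · -- both terms of H nonneg : alternative 3
      have h23' : (n₃:ℤ) ≤ (n₂:ℤ) := by exact_mod_cast h23
      refine Or.inr (Or.inr (finish3 ?_))
      rw [habsm]
      have e1 : 0 ≤ ((n₂:ℤ) - n₃) * ((n₂:ℤ) + n₃ + d - 1) :=
        mul_nonneg (by linarith) (by linarith)
      have e2 : ((n:ℤ) - n₁) * ((n:ℤ) + n₁ + (d:ℤ) - 1) ≤ H := by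
        rw [hid]; nlinarith [e1]
      refine iz1 (d:ℤ) (n:ℤ) (n₁:ℤ) _ _ H hd2 ?_ (by linarith) e2 habs1 habs0
      rw [hmcast]
      exact max_le (by linarith) (by linarith)
    · -- n₃ > n₂ : cancellation possible; max = n₁
      have h23' : (n₂:ℤ) < (n₃:ℤ) := by exact_mod_cast h23
      by_cases hkey : ((n₁:ℤ)) * ((n:ℤ) - n₁) ≤ 6*((d:ℤ)+1)*|H|
      · refine Or.inr (Or.inr (finish3 ?_))
        rw [habsm, hmcast,
          max_eq_left (show (n₂:ℤ) ≤ (n₁:ℤ) by linarith)]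
        exact hkey
      · refine Or.inr (Or.inl ?_)
        push_neg at hkey
        have hkey2 : (n:ℤ) < ((d:ℤ)+1) * (n₃:ℤ)^2 :=
          iz2 (d:ℤ) (n:ℤ) (n₁:ℤ) (n₂:ℤ) (n₃:ℤ) (|H|) H hd2 hn2n h23' hcZ hn1n hid
            habs1 habs0 hkey
        have h3n : (n:ℤ) ≤ 3 * (n₁:ℤ) := by linarith
        -- real part
        have hq : Real.sqrt (n:ℝ) ≤ ((d:ℝ)+1) * (n₃:ℝ) := by
          have h2 : (n:ℝ) < ((d:ℝ)+1) * (n₃:ℝ)^2 := by exact_mod_cast hkey2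
          have h1 : (n:ℝ) ≤ (((d:ℝ)+1) * (n₃:ℝ))^2 := by
            nlinarith [sq_nonneg ((n₃:ℝ)), Nat.cast_nonneg (α := ℝ) d,
              mul_nonneg (Nat.cast_nonneg (α := ℝ) d) (sq_nonneg ((n₃:ℝ)))]
          calc Real.sqrt (n:ℝ) ≤ Real.sqrt ((((d:ℝ)+1) * (n₃:ℝ))^2) := Real.sqrt_le_sqrt h1
            _ = ((d:ℝ)+1) * (n₃:ℝ) := Real.sqrt_sq (by positivity)
        have h3nR : (n:ℝ) ≤ 3 * (n₁:ℝ) := by exact_mod_cast h3n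
        rw [rpow_3half hnn, div_mul_eq_mul_div, div_le_iff₀ hd6]
        have c1 : (n:ℝ) * Real.sqrt (n:ℝ) ≤ (n:ℝ) * (((d:ℝ)+1) * (n₃:ℝ)) :=
          mul_le_mul_of_nonneg_left hq hnn
        have c2 : (n:ℝ) * (((d:ℝ)+1) * (n₃:ℝ)) ≤ (3*s1) * (((d:ℝ)+1) * s3) := by
          have := mul_le_mul (show (n:ℝ) ≤ 3*s1 by linarith)
            (mul_le_mul_of_nonneg_left hs3 (by positivity))
            (by positivity) (by linarith)
          linarith [this]
        have c3 : (3*s1) * (((d:ℝ)+1) * s3) ≤ s1 * s2 * s3 * (6 * ((d:ℝ)+1)) := by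
          have t2 : 0 ≤ s1 * s3 * ((d:ℝ)+1) := by
            apply mul_nonneg (mul_nonneg (by linarith) (by linarith)) (by positivity)
          have t1 : 0 ≤ s1 * s3 * ((d:ℝ)+1) * (s2 - 1) :=
            mul_nonneg t2 (by linarith)
          nlinarith [t1, t2]
        linarith [c1, c2, c3]
end

section
/- Let 0 ≤ δ ≤ 1 and let η > (1 − δ)/2. Then there exists a constant C > 0 such that for all sequences a, b : ℕ → [0, ∞) one has ∑_{n≥0} ∑_{m≥0} a_n b_m / ⟨n − m⟩^δ ≤ C · (∑_{n≥0} ⟨n⟩^{2η} a_n²)^{1/2} · (∑_{m≥0} ⟨m⟩^{2η} b_m²)^{1/2}, where both sides are interpreted as values in [0, ∞]. -/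
/-
Put `t = 2η + δ`, so that `t > 1` and `δ ≤ t` (as `η ≥ 0`). A weighted Schur test with the weights
`⟨n⟩^{-t}` reduces the inequality to the row bound `∑ₘ ⟨n - m⟩^{-δ} ⟨m⟩^{-t} ≲ ⟨n⟩^{2η} ⟨n⟩^{-t}`.
Since the larger of `⟨n - m⟩`, `⟨m⟩` is at least `⟨n⟩ / 2`, each summand is at most
`2^δ ⟨n⟩^{-δ} (⟨n - m⟩^{-t} + ⟨m⟩^{-t})`, and `∑_{k ∈ ℤ} ⟨k⟩^{-t} < ∞` because `t > 1`.
-/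

open scoped ENNReal

namespace ENNReal

variable {ι κ : Type*}

theorem inner_le_Lp_mul_Lq_tsum (f g : ι → ℝ≥0∞) {p q : ℝ} (hpq : p.HolderConjugate q) :
    ∑' i, f i * g i ≤ (∑' i, f i ^ p) ^ (1 / p) * (∑' i, g i ^ q) ^ (1 / q) := by
  refine ENNReal.summable.tsum_le_of_sum_le fun s => (inner_le_Lp_mul_Lq s f g hpq).trans ?_
  have hp : 0 ≤ 1 / p := one_div_nonneg.2 hpq.nonneg
  have hq : 0 ≤ 1 / q := one_div_nonneg.2 hpq.symm.nonneg
  gcongr <;> exact ENNReal.sum_le_tsum s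

theorem tsum_tsum_sq_mul_div_le {K : ι → κ → ℝ≥0∞} {p : ι → ℝ≥0∞} {q : κ → ℝ≥0∞}
    {w : ι → ℝ≥0∞} {C : ℝ≥0∞} (hp0 : ∀ i, p i ≠ 0) (hp : ∀ i, p i ≠ ∞)
    (hrow : ∀ i, ∑' j, K i j * q j ≤ C * w i * p i) (a : ι → ℝ≥0∞) :
    ∑' i, ∑' j, a i ^ 2 * K i j * q j / p i ≤ C * ∑' i, w i * a i ^ 2 := by
  rw [← ENNReal.tsum_mul_left]
  refine ENNReal.tsum_le_tsum fun i => ?_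
  calc ∑' j, a i ^ 2 * K i j * q j / p i = a i ^ 2 * (p i)⁻¹ * ∑' j, K i j * q j := by
        rw [← ENNReal.tsum_mul_left]
        simp only [div_eq_mul_inv]
        congr 1 with j
        ring
    _ ≤ a i ^ 2 * (p i)⁻¹ * (C * w i * p i) := by gcongr; exact hrow i
    _ = C * (w i * a i ^ 2) * ((p i)⁻¹ * p i) := by ring
    _ = C * (w i * a i ^ 2) := by rw [ENNReal.inv_mul_cancel (hp0 i) (hp i), mul_one]

theorem tsum_tsum_mul_le_of_schur {K : ι → κ → ℝ≥0∞} {p : ι → ℝ≥0∞} {q : κ → ℝ≥0∞}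
    {w : ι → ℝ≥0∞} {v : κ → ℝ≥0∞} {C : ℝ≥0∞}
    (hp0 : ∀ i, p i ≠ 0) (hp : ∀ i, p i ≠ ∞) (hq0 : ∀ j, q j ≠ 0) (hq : ∀ j, q j ≠ ∞)
    (hrow : ∀ i, ∑' j, K i j * q j ≤ C * w i * p i)
    (hcol : ∀ j, ∑' i, K i j * p i ≤ C * v j * q j) (a : ι → ℝ≥0∞) (b : κ → ℝ≥0∞) :
    ∑' i, ∑' j, a i * K i j * b j
      ≤ C * (∑' i, w i * a i ^ 2) ^ (1 / 2 : ℝ) * (∑' j, v j * b j ^ 2) ^ (1 / 2 : ℝ) := by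
  set F : ι × κ → ℝ≥0∞ := fun x => (a x.1 ^ 2 * K x.1 x.2 * q x.2 / p x.1) ^ (1 / 2 : ℝ)
  set G : ι × κ → ℝ≥0∞ := fun x => (b x.2 ^ 2 * K x.1 x.2 * p x.1 / q x.2) ^ (1 / 2 : ℝ)
  have hFG : ∀ x : ι × κ, a x.1 * K x.1 x.2 * b x.2 = F x * G x := by
    rintro ⟨i, j⟩
    have hsq : a i ^ 2 * K i j * q j / p i * (b j ^ 2 * K i j * p i / q j)
        = (a i * K i j * b j) ^ 2 := by
      simp only [div_eq_mul_inv]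
      calc _ = (a i * K i j * b j) ^ 2 * (p i * (p i)⁻¹) * (q j * (q j)⁻¹) := by ring
        _ = _ := by
          rw [ENNReal.mul_inv_cancel (hp0 i) (hp i), ENNReal.mul_inv_cancel (hq0 j) (hq j)]
          ring
    simp only [F, G, ← ENNReal.mul_rpow_of_nonneg _ _ (by norm_num : (0 : ℝ) ≤ 1 / 2), hsq]
    rw [← ENNReal.rpow_natCast, ← ENNReal.rpow_mul]
    norm_num
  have hF : ∑' x, F x ^ (2 : ℝ) ≤ C * ∑' i, w i * a i ^ 2 := by
    simp only [F, one_div, rpow_inv_rpow two_ne_zero]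
    rw [ENNReal.tsum_prod']
    exact tsum_tsum_sq_mul_div_le hp0 hp hrow a
  have hG : ∑' x, G x ^ (2 : ℝ) ≤ C * ∑' j, v j * b j ^ 2 := by
    simp only [G, one_div, rpow_inv_rpow two_ne_zero]
    rw [ENNReal.tsum_prod', ENNReal.tsum_comm]
    exact tsum_tsum_sq_mul_div_le (K := fun j i => K i j) hq0 hq hcol b
  calc ∑' i, ∑' j, a i * K i j * b j = ∑' x, F x * G x := by
        rw [ENNReal.tsum_prod']
        exact tsum_congr fun i => tsum_congr fun j => hFG (i, j)
    _ ≤ (∑' x, F x ^ (2 : ℝ)) ^ (1 / 2 : ℝ) * (∑' x, G x ^ (2 : ℝ)) ^ (1 / 2 : ℝ) :=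
        inner_le_Lp_mul_Lq_tsum F G .two_two
    _ ≤ (C * ∑' i, w i * a i ^ 2) ^ (1 / 2 : ℝ) * (C * ∑' j, v j * b j ^ 2) ^ (1 / 2 : ℝ) := by
        gcongr
    _ = C * (∑' i, w i * a i ^ 2) ^ (1 / 2 : ℝ) * (∑' j, v j * b j ^ 2) ^ (1 / 2 : ℝ) := by
        have hhalf : (0 : ℝ) ≤ 1 / 2 := by norm_num
        have hC : C ^ (1 / 2 : ℝ) * C ^ (1 / 2 : ℝ) = C := by
          rw [← rpow_add_of_nonneg _ _ hhalf hhalf]; norm_num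
        rw [mul_rpow_of_nonneg _ _ hhalf, mul_rpow_of_nonneg _ _ hhalf]
        conv_rhs => rw [← hC]
        ring

theorem ofReal_mul_div_rpow {a b x δ : ℝ} (ha : 0 ≤ a) (hx : 0 ≤ x) :
    ENNReal.ofReal (a * b / x ^ δ)
      = ENNReal.ofReal a * ENNReal.ofReal (x ^ (-δ)) * ENNReal.ofReal b := by
  rw [← ENNReal.ofReal_mul ha, ← ENNReal.ofReal_mul (mul_nonneg ha (Real.rpow_nonneg hx _)),
    Real.rpow_neg hx, div_eq_mul_inv]
  congr 1
  ring

end ENNReal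

theorem Real.rpow_neg_mul_rpow_neg_le_of_le {u v δ t : ℝ} (hu : 0 < u) (huv : u ≤ v)
    (hδt : δ ≤ t) :
    u ^ (-δ) * v ^ (-t) ≤ u ^ (-t) * v ^ (-δ) := by
  have hv : 0 < v := hu.trans_le huv
  calc u ^ (-δ) * v ^ (-t) = u ^ (-δ) * v ^ (δ - t) * v ^ (-δ) := by
        rw [mul_assoc, ← Real.rpow_add hv]; ring_nf
    _ ≤ u ^ (-δ) * u ^ (δ - t) * v ^ (-δ) := by
        gcongr u ^ (-δ) * ?_ * v ^ (-δ)
        exact Real.rpow_le_rpow_of_nonpos hu huv (by linarith)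
    _ = u ^ (-t) * v ^ (-δ) := by rw [← Real.rpow_add hu]; ring_nf

noncomputable def japaneseBracket (x : ℝ) : ℝ := √(1 + x ^ 2)

theorem japaneseBracket_pos (x : ℝ) : 0 < japaneseBracket x := Real.sqrt_pos.2 (by positivity)

theorem japaneseBracket_sub_comm (x y : ℝ) :
    japaneseBracket (x - y) = japaneseBracket (y - x) := by
  rw [japaneseBracket, japaneseBracket, ← neg_sub, neg_sq]

theorem japaneseBracket_rpow_two_mul (x s : ℝ) :
    japaneseBracket x ^ (2 * s) = (1 + x ^ 2) ^ s := by
  rw [japaneseBracket, Real.sqrt_eq_rpow, ← Real.rpow_mul (by positivity), one_div,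
    inv_mul_cancel_left₀ two_ne_zero]

theorem japaneseBracket_add_le_two_mul {x y : ℝ} (h : japaneseBracket y ≤ japaneseBracket x) :
    japaneseBracket (x + y) ≤ 2 * japaneseBracket x := by
  have hyx : y ^ 2 ≤ x ^ 2 := by
    simpa [japaneseBracket, Real.sqrt_le_sqrt_iff (by positivity : (0 : ℝ) ≤ 1 + x ^ 2)] using h
  rw [japaneseBracket, Real.sqrt_le_iff]
  refine ⟨(mul_pos two_pos (japaneseBracket_pos x)).le, ?_⟩
  rw [mul_pow, japaneseBracket, Real.sq_sqrt (by positivity)]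
  nlinarith [sq_nonneg (x - y)]

theorem japaneseBracket_rpow_neg_le_of_le {x y δ : ℝ} (hδ : 0 ≤ δ)
    (h : japaneseBracket y ≤ japaneseBracket x) :
    japaneseBracket x ^ (-δ) ≤ 2 ^ δ * japaneseBracket (x + y) ^ (-δ) := by
  have hx := japaneseBracket_pos x
  calc japaneseBracket x ^ (-δ) = 2 ^ δ * (2 * japaneseBracket x) ^ (-δ) := by
        rw [Real.mul_rpow zero_le_two hx.le, ← mul_assoc, ← Real.rpow_add two_pos]
        simp
    _ ≤ 2 ^ δ * japaneseBracket (x + y) ^ (-δ) := by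
        gcongr 2 ^ δ * ?_
        exact Real.rpow_le_rpow_of_nonpos (japaneseBracket_pos _)
          (japaneseBracket_add_le_two_mul h) (neg_nonpos.2 hδ)

-- When `⟨x⟩ ≤ ⟨y⟩`, the surplus exponent `t - δ` is first moved from `⟨y⟩` onto `⟨x⟩`.
theorem japaneseBracket_rpow_neg_mul_le {δ t : ℝ} (hδ : 0 ≤ δ) (hδt : δ ≤ t) (x y : ℝ) :
    japaneseBracket x ^ (-δ) * japaneseBracket y ^ (-t)
      ≤ 2 ^ δ * japaneseBracket (x + y) ^ (-δ)
          * (japaneseBracket x ^ (-t) + japaneseBracket y ^ (-t)) := by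
  have hx := japaneseBracket_pos x
  have hy := japaneseBracket_pos y
  have hxy := japaneseBracket_pos (x + y)
  rcases le_total (japaneseBracket y) (japaneseBracket x) with h | h
  · calc _ ≤ 2 ^ δ * japaneseBracket (x + y) ^ (-δ) * japaneseBracket y ^ (-t) := by
          gcongr; exact japaneseBracket_rpow_neg_le_of_le hδ h
      _ ≤ _ := by gcongr; exact le_add_of_nonneg_left (by positivity)
  · calc _ ≤ japaneseBracket x ^ (-t) * japaneseBracket y ^ (-δ) :=
          Real.rpow_neg_mul_rpow_neg_le_of_le hx h hδt
      _ ≤ japaneseBracket x ^ (-t) * (2 ^ δ * japaneseBracket (x + y) ^ (-δ)) := by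
          gcongr; rw [add_comm]; exact japaneseBracket_rpow_neg_le_of_le hδ h
      _ ≤ _ := by
          rw [mul_comm]; gcongr; exact le_add_of_nonneg_right (by positivity)

theorem summable_japaneseBracket_rpow_neg {t : ℝ} (ht : 1 < t) :
    Summable fun k : ℤ => japaneseBracket k ^ (-t) := by
  refine (Real.summable_abs_int_rpow ht).of_norm_bounded_eventually ?_
  filter_upwards [(Set.finite_singleton (0 : ℤ)).compl_mem_cofinite] with k hk
  have hk' : 0 < |(k : ℝ)| := by simpa using hk
  rw [Real.norm_of_nonneg (Real.rpow_nonneg (japaneseBracket_pos k).le _)]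
  refine Real.rpow_le_rpow_of_nonpos hk' ?_ (by linarith)
  rw [japaneseBracket, Real.le_sqrt (abs_nonneg _) (by positivity), sq_abs]
  linarith

theorem exists_tsum_japaneseBracket_sub_mul_le {δ t : ℝ} (hδ : 0 ≤ δ) (hδt : δ ≤ t)
    (ht : 1 < t) :
    ∃ C : ℝ, 0 < C ∧ ∀ n : ℤ,
      ∑' m : ℤ, ENNReal.ofReal (japaneseBracket (n - m) ^ (-δ))
          * ENNReal.ofReal (japaneseBracket m ^ (-t))
        ≤ ENNReal.ofReal (C * japaneseBracket n ^ (-δ)) := by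
  have hnonneg : ∀ x, 0 ≤ japaneseBracket x ^ (-t) :=
    fun x => (Real.rpow_pos_of_pos (japaneseBracket_pos x) _).le
  set S := ∑' k : ℤ, japaneseBracket k ^ (-t)
  have hsum := summable_japaneseBracket_rpow_neg ht
  have hS : ∑' k : ℤ, ENNReal.ofReal (japaneseBracket k ^ (-t)) = ENNReal.ofReal S :=
    (ENNReal.ofReal_tsum_of_nonneg (fun k : ℤ => hnonneg k) hsum).symm
  have hSpos : 0 < S := hsum.tsum_pos (fun k : ℤ => hnonneg k) 0 (by simp [japaneseBracket])
  refine ⟨2 ^ δ * (2 * S), by positivity, fun n => ?_⟩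
  have hn := japaneseBracket_pos n
  have hshift :
      ∑' m : ℤ, ENNReal.ofReal (japaneseBracket (n - m) ^ (-t)) = ENNReal.ofReal S := by
    rw [← hS, ← (Equiv.subLeft n).tsum_eq]
    simp
  calc ∑' m : ℤ, ENNReal.ofReal (japaneseBracket (n - m) ^ (-δ))
          * ENNReal.ofReal (japaneseBracket m ^ (-t))
      ≤ ∑' m : ℤ, ENNReal.ofReal (2 ^ δ * japaneseBracket n ^ (-δ))
          * (ENNReal.ofReal (japaneseBracket (n - m) ^ (-t))
            + ENNReal.ofReal (japaneseBracket m ^ (-t))) := by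
        refine ENNReal.tsum_le_tsum fun m => ?_
        rw [← ENNReal.ofReal_mul (Real.rpow_pos_of_pos (japaneseBracket_pos _) _).le,
          ← ENNReal.ofReal_add (hnonneg _) (hnonneg _), ← ENNReal.ofReal_mul (by positivity)]
        refine ENNReal.ofReal_le_ofReal ?_
        simpa using japaneseBracket_rpow_neg_mul_le hδ hδt (n - m) m
    _ = ENNReal.ofReal (2 ^ δ * (2 * S) * japaneseBracket n ^ (-δ)) := by
        rw [ENNReal.tsum_mul_left, ENNReal.tsum_add, hshift, hS,
          ← ENNReal.ofReal_add hSpos.le hSpos.le, ← ENNReal.ofReal_mul (by positivity)]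
        congr 1
        ring

theorem exists_tsum_nat_japaneseBracket_sub_mul_le {δ t : ℝ} (hδ : 0 ≤ δ) (hδt : δ ≤ t)
    (ht : 1 < t) :
    ∃ C : ℝ, 0 < C ∧ ∀ n : ℕ,
      ∑' m : ℕ, ENNReal.ofReal (japaneseBracket (n - m) ^ (-δ))
          * ENNReal.ofReal (japaneseBracket m ^ (-t))
        ≤ ENNReal.ofReal (C * japaneseBracket n ^ (-δ)) := by
  obtain ⟨C, hC, hconv⟩ := exists_tsum_japaneseBracket_sub_mul_le hδ hδt ht
  refine ⟨C, hC, fun n => le_trans ?_ (by simpa using hconv n)⟩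
  simpa using ENNReal.tsum_comp_le_tsum_of_injective Nat.cast_injective fun m : ℤ =>
    ENNReal.ofReal (japaneseBracket ((n : ℤ) - m) ^ (-δ))
      * ENNReal.ofReal (japaneseBracket m ^ (-t))
theorem stmt_2 (δ η : ℝ) (hδ0 : 0 ≤ δ) (hδ1 : δ ≤ 1) (hη : (1 - δ) / 2 < η) :
    ∃ C : ℝ, 0 < C ∧
      ∀ a b : ℕ → ℝ, (∀ n, 0 ≤ a n) → (∀ m, 0 ≤ b m) →
        (∑' n : ℕ, ∑' m : ℕ,
            ENNReal.ofReal (a n * b m / Real.sqrt (1 + ((n : ℝ) - (m : ℝ)) ^ 2) ^ δ))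
          ≤ ENNReal.ofReal C *
            (∑' n : ℕ, ENNReal.ofReal ((1 + (n : ℝ) ^ 2) ^ η * a n ^ 2)) ^ ((1 : ℝ) / 2) *
            (∑' m : ℕ, ENNReal.ofReal ((1 + (m : ℝ) ^ 2) ^ η * b m ^ 2)) ^ ((1 : ℝ) / 2) := by
  set t := 2 * η + δ
  obtain ⟨C, hC, hconv⟩ :=
    exists_tsum_nat_japaneseBracket_sub_mul_le hδ0 (by linarith : δ ≤ t) (by linarith : 1 < t)
  have hrow : ∀ n : ℕ, ∑' m : ℕ, ENNReal.ofReal (japaneseBracket (n - m) ^ (-δ))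
        * ENNReal.ofReal (japaneseBracket m ^ (-t))
      ≤ ENNReal.ofReal C * ENNReal.ofReal ((1 + (n : ℝ) ^ 2) ^ η)
        * ENNReal.ofReal (japaneseBracket n ^ (-t)) := fun n => by
    rw [← ENNReal.ofReal_mul hC.le, ← ENNReal.ofReal_mul (by positivity), mul_assoc,
      ← japaneseBracket_rpow_two_mul, ← Real.rpow_add (japaneseBracket_pos n)]
    convert hconv n using 4
    ring
  have hp : ∀ n : ℕ, ENNReal.ofReal (japaneseBracket n ^ (-t)) ≠ 0 := fun n =>
    (ENNReal.ofReal_pos.2 (Real.rpow_pos_of_pos (japaneseBracket_pos n) _)).ne'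
  refine ⟨C, hC, fun a b ha hb => ?_⟩
  have hweight : ∀ c : ℕ → ℝ, (∀ n, 0 ≤ c n) →
      ∑' n : ℕ, ENNReal.ofReal ((1 + (n : ℝ) ^ 2) ^ η * c n ^ 2)
        = ∑' n : ℕ, ENNReal.ofReal ((1 + (n : ℝ) ^ 2) ^ η) * ENNReal.ofReal (c n) ^ 2 :=
    fun c hc => tsum_congr fun n => by
      rw [ENNReal.ofReal_mul (by positivity), ENNReal.ofReal_pow (hc n)]
  rw [hweight a ha, hweight b hb]
  convert ENNReal.tsum_tsum_mul_le_of_schur hp (fun _ => ENNReal.ofReal_ne_top) hp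
    (fun _ => ENNReal.ofReal_ne_top) hrow
    (fun m => by simpa only [japaneseBracket_sub_comm] using hrow m)
    (fun n => ENNReal.ofReal (a n)) (fun m => ENNReal.ofReal (b m)) using 3 with n
  exact tsum_congr fun m => ENNReal.ofReal_mul_div_rpow (ha n) (japaneseBracket_pos _).le
end

section
/- For every ε > 0 there exists a constant C > 0 such that for all natural numbers N, M, τ with 1 ≤ M ≤ N, the number of pairs (n, m) ∈ ℕ × ℕ with N ≤ n < 2N, M ≤ m < 2M, and n(n+1) + m(m+1) = τ is at most C M^ε. -/
/-!
Writing `x = 2n + 1`, `y = 2m + 1`, the equation becomes `x² + y² = 4τ + 2`. A primitive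
representation `x² + y² = S` gives the square root `x / y` of `-1` modulo `S`, and determines it;
by the Chinese remainder theorem there are at most `2 ^ ω(S) ≤ d(S)` such roots, so grouping by
`gcd x y` shows that `S` has at most `d(S)²` representations. If `N < M²`, then `S ≤ (3M)⁴` and the
divisor bound `d(S) ≪_δ S^δ` gives `O(M^ε)`. If `M² ≤ N`, the identity
`(n₁ - n₂)(n₁ + n₂ + 1) = (m₂ - m₁)(m₁ + m₂ + 1)` forces two solutions to have `m`'s more than
`M / 2` apart, so there are at most two of them.
-/

open Finset Real

theorem IsLocalRing.eq_or_eq_neg_of_sq_eq_sq {R : Type*} [CommRing R] [IsLocalRing R]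
    (h2 : IsUnit (2 : R)) {z w : R} (hw : IsUnit w) (h : z ^ 2 = w ^ 2) : z = w ∨ z = -w := by
  have hprod : (z - w) * (z + w) = 0 := by linear_combination h
  have hunit : IsUnit ((z + w) + -(z - w)) := by
    rw [show (z + w) + -(z - w) = 2 * w by ring]
    exact h2.mul hw
  rcases IsLocalRing.isUnit_or_isUnit_of_isUnit_add hunit with hu | hu
  · exact .inl (sub_eq_zero.mp (hu.mul_left_eq_zero.mp hprod))
  · exact .inr (eq_neg_of_add_eq_zero_left ((IsUnit.neg_iff _).mp hu |>.mul_right_eq_zero.mp hprod))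

theorem ZMod.isLocalRing_prime_pow (p : ℕ) [Fact p.Prime] {n : ℕ} (hn : n ≠ 0) :
    IsLocalRing (ZMod (p ^ n)) :=
  have : Nontrivial (ZMod (p ^ n)) :=
    ZMod.nontrivial_iff.mpr (Nat.one_lt_pow hn (Fact.out : p.Prime).one_lt).ne'
  IsLocalRing.of_surjective (PadicInt.toZModPow n) (ZMod.ringHom_surjective _)

theorem ZMod.card_sq_eq_neg_one_prime_pow_le {p n : ℕ} (hp : p.Prime) (hn : n ≠ 0)
    {s : Finset (ZMod (p ^ n))} (hs : ∀ z ∈ s, z ^ 2 = -1) : #s ≤ 2 := by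
  obtain rfl | hp2 := eq_or_ne p 2
  · obtain rfl | hn2 := eq_or_ne n 1
    · exact (card_le_univ s).trans (by simp)
    -- `-1` is not a square modulo `4`
    suffices s = ∅ by simp [this]
    refine eq_empty_of_forall_notMem fun z hz ↦ ?_
    have h4 : 4 ∣ 2 ^ n := pow_dvd_pow 2 (by omega : 2 ≤ n)
    have := congrArg (ZMod.castHom h4 (ZMod 4)) (hs z hz)
    rw [map_pow, map_neg, map_one] at this
    revert this
    generalize ZMod.castHom h4 (ZMod 4) z = w
    revert w
    decide
  have := Fact.mk hp
  have := ZMod.isLocalRing_prime_pow p hn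
  obtain rfl | ⟨z₀, hz₀⟩ := s.eq_empty_or_nonempty
  · simp
  have h2 : IsUnit (2 : ZMod (p ^ n)) := by
    exact_mod_cast (ZMod.isUnit_iff_coprime 2 (p ^ n)).mpr
      (Nat.Coprime.pow_right n ((Nat.coprime_primes Nat.prime_two hp).mpr hp2.symm))
  have hz₀u : IsUnit z₀ := IsUnit.of_mul_eq_one (-z₀) (by linear_combination -hs z₀ hz₀)
  calc #s ≤ #{z₀, -z₀} := card_le_card fun z hz ↦ by
        rcases IsLocalRing.eq_or_eq_neg_of_sq_eq_sq h2 hz₀u ((hs z hz).trans (hs z₀ hz₀).symm)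
          with rfl | rfl <;> simp
    _ ≤ 2 := card_le_two

theorem ZMod.card_sq_eq_neg_one_le (k : ℕ) {s : Finset (ZMod k)} (hs : ∀ z ∈ s, z ^ 2 = -1) :
    #s ≤ 2 ^ #k.primeFactors := by
  induction k using Nat.recOnPosPrimePosCoprime with
  | zero =>
    suffices s = ∅ by simp [this]
    exact eq_empty_of_forall_notMem fun (z : ℤ) hz ↦ by
      have : z ^ 2 = -1 := hs z hz
      nlinarith [sq_nonneg z]
  | one => simpa using card_le_one_of_subsingleton s
  | prime_pow p n hp hn =>
    rw [Nat.primeFactors_prime_pow hn.ne' hp, card_singleton, pow_one]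
    exact ZMod.card_sq_eq_neg_one_prime_pow_le hp hn.ne' hs
  | coprime a b ha hb hab iha ihb =>
    have hsq {c : ℕ} (f : ZMod (a * b) →+* ZMod c) :
        ∀ y ∈ s.image f, y ^ 2 = -1 := by
      simp only [forall_mem_image]
      intro z hz
      rw [← map_pow, hs z hz, map_neg, map_one]
    let e : ZMod (a * b) →+* ZMod a × ZMod b := ZMod.chineseRemainder hab
    calc #s ≤ #(s.image (RingHom.fst _ _ |>.comp e) ×ˢ s.image (RingHom.snd _ _ |>.comp e)) :=
          card_le_card_of_injOn e (fun z hz ↦ mem_product.mpr ⟨mem_image_of_mem _ hz,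
            mem_image_of_mem _ hz⟩) (ZMod.chineseRemainder hab).injective.injOn
      _ ≤ 2 ^ #a.primeFactors * 2 ^ #b.primeFactors := by
          rw [card_product]; exact Nat.mul_le_mul (iha (hsq _)) (ihb (hsq _))
      _ = 2 ^ #(a * b).primeFactors := by
          rw [← pow_add, Nat.primeFactors_mul (by omega) (by omega),
            card_union_of_disjoint hab.disjoint_primeFactors]

theorem Nat.two_pow_card_primeFactors_le_card_divisors {k : ℕ} (hk : k ≠ 0) :
    2 ^ #k.primeFactors ≤ #k.divisors := by
  rw [Nat.card_divisors hk, ← prod_const]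
  refine prod_le_prod' fun p hp ↦ ?_
  have : k.factorization p ≠ 0 := Finsupp.mem_support_iff.mp (by simpa using hp)
  omega

theorem Real.add_one_le_mul_rpow {δ p : ℝ} (hδ : 0 < δ) (hp : 2 ≤ p) (e : ℕ) :
    (e + 1 : ℝ) ≤ (1 + 1 / (δ * log 2)) * (p ^ e) ^ δ := by
  have hc : 0 < δ * log 2 := mul_pos hδ (log_pos one_lt_two)
  calc (e + 1 : ℝ) ≤ (1 + 1 / (δ * log 2)) * (1 + e * (δ * log 2)) := by
        have : (1 + 1 / (δ * log 2)) * (1 + e * (δ * log 2)) =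
            e + 1 + (e * (δ * log 2) + 1 / (δ * log 2)) := by
          field_simp; ring
        rw [this]
        linarith [show 0 ≤ e * (δ * log 2) + 1 / (δ * log 2) by positivity]
    _ ≤ (1 + 1 / (δ * log 2)) * exp (e * (δ * log 2)) := by
        gcongr; linarith [add_one_le_exp (e * (δ * log 2))]
    _ = (1 + 1 / (δ * log 2)) * ((2 : ℝ) ^ e) ^ δ := by
        rw [← rpow_natCast, ← rpow_mul zero_le_two, rpow_def_of_pos two_pos]; ring_nf
    _ ≤ (1 + 1 / (δ * log 2)) * (p ^ e) ^ δ := by gcongr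

theorem Real.add_one_le_rpow_of_le {δ p : ℝ} (hδ : 0 < δ) (hp : 2 ^ (1 / δ) ≤ p) (e : ℕ) :
    (e + 1 : ℝ) ≤ (p ^ e) ^ δ := by
  have hp₀ : 0 ≤ p := le_trans (by positivity) hp
  have h2 : 2 ≤ p ^ δ := by
    calc (2 : ℝ) = (2 ^ (1 / δ)) ^ δ := by
          rw [← rpow_mul zero_le_two, one_div_mul_cancel hδ.ne', rpow_one]
      _ ≤ p ^ δ := by gcongr
  calc (e + 1 : ℝ) ≤ 2 ^ e := by exact_mod_cast Nat.lt_two_pow_self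
    _ ≤ (p ^ δ) ^ e := by gcongr
    _ = (p ^ e) ^ δ := by
        rw [← rpow_natCast, ← rpow_natCast, ← rpow_mul hp₀, ← rpow_mul hp₀, mul_comm]

theorem Nat.card_divisors_le_mul_rpow {δ : ℝ} (hδ : 0 < δ) :
    ∃ C > 0, ∀ k : ℕ, k ≠ 0 → (#k.divisors : ℝ) ≤ C * k ^ δ := by
  set A : ℝ := 1 + 1 / (δ * Real.log 2)
  have hA : 1 ≤ A := le_add_of_nonneg_right (by have := Real.log_pos one_lt_two; positivity)
  set T : ℕ := ⌈(2 : ℝ) ^ (1 / δ)⌉₊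
  refine ⟨A ^ T, by positivity, fun k hk ↦ ?_⟩
  -- small primes contribute a factor `A`, large primes a factor `1`
  have hlocal : ∀ p ∈ k.primeFactors, ((k.factorization p + 1 : ℕ) : ℝ) ≤
      (if p < T then A else 1) * ((p ^ k.factorization p : ℕ) : ℝ) ^ δ := by
    intro p hp
    push_cast
    split_ifs with hpT
    · exact add_one_le_mul_rpow hδ (by exact_mod_cast (prime_of_mem_primeFactors hp).two_le) _
    · rw [one_mul]
      exact add_one_le_rpow_of_le hδ ((le_ceil _).trans (by exact_mod_cast not_lt.mp hpT)) _
  calc (#k.divisors : ℝ) = ∏ p ∈ k.primeFactors, ((k.factorization p + 1 : ℕ) : ℝ) := by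
        rw [card_divisors hk]; push_cast; rfl
    _ ≤ ∏ p ∈ k.primeFactors, (if p < T then A else 1) * ((p ^ k.factorization p : ℕ) : ℝ) ^ δ :=
        prod_le_prod (fun _ _ ↦ by positivity) hlocal
    _ = (∏ p ∈ k.primeFactors, if p < T then A else 1) * k ^ δ := by
        rw [prod_mul_distrib, finsetProd_rpow _ _ (fun _ _ ↦ by positivity), ← Nat.cast_prod,
          ← prod_primeFactors_pow_factorization hk]
    _ ≤ A ^ T * k ^ δ := by
        gcongr
        rw [prod_ite, prod_const, prod_const, one_pow, mul_one]
        refine pow_le_pow_right₀ hA ((card_le_card fun p hp ↦ ?_).trans_eq (card_range T))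
        exact mem_range.mpr (mem_filter.mp hp).2

theorem Nat.sq_card_divisors_le_mul_rpow {δ : ℝ} (hδ : 0 < δ) :
    ∃ C > 0, ∀ k : ℕ, k ≠ 0 → (#k.divisors : ℝ) ^ 2 ≤ C * k ^ δ := by
  obtain ⟨C, hC, hdiv⟩ := card_divisors_le_mul_rpow (half_pos hδ)
  refine ⟨C ^ 2, by positivity, fun k hk ↦ ?_⟩
  calc (#k.divisors : ℝ) ^ 2 ≤ (C * k ^ (δ / 2)) ^ 2 := by gcongr; exact hdiv k hk
    _ = C ^ 2 * k ^ δ := by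
        rw [mul_pow, ← rpow_mul_natCast (Nat.cast_nonneg k), Nat.cast_ofNat,
          div_mul_cancel₀ _ two_ne_zero]

theorem Nat.Coprime.eq_of_mul_eq_mul {a b c d : ℕ} (hab : a.Coprime b) (hcd : c.Coprime d)
    (h : a * d = c * b) : a = c ∧ b = d := by
  have hbd : b = d := Nat.dvd_antisymm
    (hab.symm.dvd_of_dvd_mul_left ⟨c, by rw [h, mul_comm]⟩)
    (hcd.symm.dvd_of_dvd_mul_left ⟨a, by rw [← h, mul_comm]⟩)
  subst hbd
  rcases b.eq_zero_or_pos with rfl | hb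
  · simp_all
  · exact ⟨Nat.eq_of_mul_eq_mul_right hb h, rfl⟩

theorem Nat.card_coprime_sq_add_sq_le {S : ℕ} {s : Finset (ℕ × ℕ)}
    (hs : ∀ p ∈ s, p.1.Coprime p.2 ∧ 0 < p.2 ∧ p.1 ^ 2 + p.2 ^ 2 = S) :
    #s ≤ 2 ^ #S.primeFactors := by
  have hunit : ∀ p ∈ s, (p.2 : ZMod S) * (p.2 : ZMod S)⁻¹ = 1 := by
    intro p hp
    obtain ⟨hcop, -, hS⟩ := hs p hp
    refine ZMod.coe_mul_inv_eq_one _ ?_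
    rw [← hS, sq p.2, Nat.coprime_add_mul_right_right]
    exact (hcop.pow_left 2).symm
  have hzero : ∀ p ∈ s, (p.1 : ZMod S) ^ 2 + (p.2 : ZMod S) ^ 2 = 0 := by
    intro p hp
    have h : ((p.1 ^ 2 + p.2 ^ 2 : ℕ) : ZMod S) = 0 := by rw [(hs p hp).2.2, ZMod.natCast_self]
    exact_mod_cast h
  let f : ℕ × ℕ → ZMod S := fun p ↦ p.1 * (p.2 : ZMod S)⁻¹
  have hf : ∀ p ∈ s, f p ^ 2 = -1 := fun p hp ↦ by
    linear_combination (p.2 : ZMod S)⁻¹ ^ 2 * hzero p hp - (p.2 * (p.2 : ZMod S)⁻¹ + 1) * hunit p hp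
  -- `x * y' = x' * y` modulo `S` is an equality of naturals, both sides being below `S`
  have hlt : ∀ p ∈ s, ∀ q ∈ s, p.1 * q.2 < S := by
    intro p hp q hq
    obtain ⟨-, hp2, hpS⟩ := hs p hp
    obtain ⟨-, -, hqS⟩ := hs q hq
    refine lt_of_pow_lt_pow_left₀ 2 (Nat.zero_le _) ?_
    rw [mul_pow, sq S]
    exact Nat.mul_lt_mul_of_lt_of_le (by nlinarith) (by omega) (by nlinarith)
  have hinj : Set.InjOn f s := by
    intro p hp q hq hpq
    have hmod : ((p.1 * q.2 : ℕ) : ZMod S) = ((q.1 * p.2 : ℕ) : ZMod S) := by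
      push_cast
      linear_combination
        (p.2 * q.2 : ZMod S) * hpq - p.1 * q.2 * hunit p hp + q.1 * p.2 * hunit q hq
    rw [ZMod.natCast_eq_natCast_iff', Nat.mod_eq_of_lt (hlt p hp q hq),
      Nat.mod_eq_of_lt (hlt q hq p hp)] at hmod
    obtain ⟨h1, h2⟩ := (hs p hp).1.eq_of_mul_eq_mul (hs q hq).1 hmod
    exact Prod.ext h1 h2
  rw [← Finset.card_image_of_injOn hinj]
  exact ZMod.card_sq_eq_neg_one_le S (forall_mem_image.mpr hf)

theorem Nat.card_sq_add_sq_of_gcd_eq_le {S g : ℕ} (hS : S ≠ 0) {s : Finset (ℕ × ℕ)}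
    (hs : ∀ p ∈ s, 0 < p.2 ∧ p.1.gcd p.2 = g ∧ p.1 ^ 2 + p.2 ^ 2 = S) :
    #s ≤ 2 ^ #S.primeFactors := by
  obtain rfl | ⟨p₀, hp₀⟩ := s.eq_empty_or_nonempty
  · simp
  have hg : 0 < g := (hs p₀ hp₀).2.1 ▸ Nat.gcd_pos_of_pos_right _ (hs p₀ hp₀).1
  have hdvd : ∀ p ∈ s, g ∣ p.1 ∧ g ∣ p.2 := fun p hp ↦
    (hs p hp).2.1 ▸ ⟨Nat.gcd_dvd_left _ _, Nat.gcd_dvd_right _ _⟩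
  have hSg : ∀ p ∈ s, S = ((p.1 / g) ^ 2 + (p.2 / g) ^ 2) * g ^ 2 := by
    intro p hp
    obtain ⟨⟨x, hx⟩, ⟨y, hy⟩⟩ := hdvd p hp
    rw [← (hs p hp).2.2, hx, hy, Nat.mul_div_cancel_left _ hg, Nat.mul_div_cancel_left _ hg]
    ring
  let reduce : ℕ × ℕ → ℕ × ℕ := fun p ↦ (p.1 / g, p.2 / g)
  have hinj : Set.InjOn reduce s := by
    intro p hp q hq h
    simp only [reduce, Prod.mk.injEq] at h
    exact Prod.ext (Nat.div_left_inj (hdvd p hp).1 (hdvd q hq).1 |>.mp h.1)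
      (Nat.div_left_inj (hdvd p hp).2 (hdvd q hq).2 |>.mp h.2)
  have hprim : ∀ p ∈ s, (p.1 / g).Coprime (p.2 / g) ∧ 0 < p.2 / g ∧
      (p.1 / g) ^ 2 + (p.2 / g) ^ 2 = S / g ^ 2 := by
    intro p hp
    obtain ⟨hp2, rfl, -⟩ := hs p hp
    refine ⟨Nat.coprime_div_gcd_div_gcd hg, Nat.div_pos (Nat.le_of_dvd hp2 (hdvd p hp).2) hg, ?_⟩
    rw [hSg p hp, Nat.mul_div_cancel _ (by positivity)]
  calc #s = #(s.image reduce) := (Finset.card_image_of_injOn hinj).symm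
    _ ≤ 2 ^ #(S / g ^ 2).primeFactors :=
        Nat.card_coprime_sq_add_sq_le (forall_mem_image.mpr hprim)
    _ ≤ 2 ^ #S.primeFactors := Nat.pow_le_pow_right two_pos <| card_le_card <|
        Nat.primeFactors_mono (Nat.div_dvd_of_dvd ⟨_, hSg p₀ hp₀ |>.trans (mul_comm _ _)⟩) hS

theorem Nat.card_sq_add_sq_le {S : ℕ} (hS : S ≠ 0) {s : Finset (ℕ × ℕ)}
    (hs : ∀ p ∈ s, 0 < p.2 ∧ p.1 ^ 2 + p.2 ^ 2 = S) :
    #s ≤ #S.divisors ^ 2 := by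
  have hmaps : ∀ p ∈ s, p.1.gcd p.2 ∈ S.divisors := by
    intro p hp
    refine mem_divisors.mpr ⟨?_, hS⟩
    rw [← (hs p hp).2]
    exact dvd_add ((Nat.gcd_dvd_left _ _).trans (dvd_pow_self _ two_ne_zero))
      ((Nat.gcd_dvd_right _ _).trans (dvd_pow_self _ two_ne_zero))
  have hfiber : ∀ g ∈ S.divisors, #{p ∈ s | p.1.gcd p.2 = g} ≤ 2 ^ #S.primeFactors :=
    fun g _ ↦ Nat.card_sq_add_sq_of_gcd_eq_le hS fun p hp ↦
      have ⟨hps, hpg⟩ := mem_filter.mp hp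
      ⟨(hs p hps).1, hpg, (hs p hps).2⟩
  calc #s ≤ 2 ^ #S.primeFactors * #S.divisors := card_le_mul_card_image_of_maps_to hmaps _ hfiber
    _ ≤ #S.divisors ^ 2 := by
      rw [sq]; exact Nat.mul_le_mul_right _ (Nat.two_pow_card_primeFactors_le_card_divisors hS)

theorem Nat.strictMono_mul_add_one : StrictMono fun n : ℕ ↦ n * (n + 1) :=
  fun _ _ h ↦ Nat.mul_lt_mul'' h (by omega)

theorem card_le_sq_card_divisors_of_pronic_add_pronic_eq {τ : ℕ} {s : Finset (ℕ × ℕ)}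
    (hs : ∀ p ∈ s, p.1 * (p.1 + 1) + p.2 * (p.2 + 1) = τ) :
    #s ≤ #(4 * τ + 2).divisors ^ 2 := by
  let odd : ℕ × ℕ → ℕ × ℕ := fun p ↦ (2 * p.1 + 1, 2 * p.2 + 1)
  have hinj : Set.InjOn odd s := fun p _ q _ h ↦ by
    simp only [odd, Prod.mk.injEq] at h
    exact Prod.ext (by omega) (by omega)
  rw [← Finset.card_image_of_injOn hinj]
  refine Nat.card_sq_add_sq_le (by omega) (forall_mem_image.mpr fun p hp ↦ ⟨Nat.succ_pos _, ?_⟩)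
  rw [← hs p hp]
  ring

theorem lt_two_mul_sub_of_pronic_add_pronic_eq {N M n₁ m₁ n₂ m₂ : ℕ} (hMN : M * M ≤ N)
    (hn₂ : N ≤ n₂) (hm₂ : m₂ < 2 * M)
    (h : n₁ * (n₁ + 1) + m₁ * (m₁ + 1) = n₂ * (n₂ + 1) + m₂ * (m₂ + 1)) (hm : m₁ < m₂) :
    M < 2 * (m₂ - m₁) := by
  have hn : n₂ < n₁ := by
    by_contra! hn
    have h₁ : n₁ * (n₁ + 1) ≤ n₂ * (n₂ + 1) := Nat.strictMono_mul_add_one.monotone hn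
    have h₂ : m₁ * (m₁ + 1) < m₂ * (m₂ + 1) := Nat.strictMono_mul_add_one hm
    omega
  obtain ⟨a, rfl⟩ := Nat.exists_eq_add_of_lt hn
  obtain ⟨d, rfl⟩ := Nat.exists_eq_add_of_lt hm
  rw [show m₁ + d + 1 - m₁ = d + 1 by omega]
  -- `(a + 1) (n₁ + n₂ + 1) = (d + 1) (m₁ + m₂ + 1)`, where the left side exceeds `2 M²`
  -- and `m₁ + m₂ + 1 < 4 M`
  nlinarith

theorem card_le_two_of_lt_two_mul_sub {M : ℕ} {t : Finset ℕ} (ht : ∀ a ∈ t, M ≤ a ∧ a < 2 * M)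
    (hgap : ∀ a ∈ t, ∀ b ∈ t, a < b → M < 2 * (b - a)) : #t ≤ 2 := by
  by_contra! h
  obtain ⟨a, ha, b, hb, c, hc, hab, hac, hbc⟩ := two_lt_card.mp h
  have := ht a ha; have := ht b hb; have := ht c hc
  have := hgap a ha b hb; have := hgap b hb a ha; have := hgap a ha c hc
  have := hgap c hc a ha; have := hgap b hb c hc; have := hgap c hc b hb
  omega

def levelPairs (N M τ : ℕ) : Finset (ℕ × ℕ) :=
  {p ∈ Ico N (2 * N) ×ˢ Ico M (2 * M) | p.1 * (p.1 + 1) + p.2 * (p.2 + 1) = τ}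

theorem mem_levelPairs {N M τ : ℕ} {p : ℕ × ℕ} :
    p ∈ levelPairs N M τ ↔
      (N ≤ p.1 ∧ p.1 < 2 * N) ∧ (M ≤ p.2 ∧ p.2 < 2 * M) ∧
        p.1 * (p.1 + 1) + p.2 * (p.2 + 1) = τ := by
  simp [levelPairs, and_assoc]

theorem card_levelPairs_le_two {N M τ : ℕ} (hMN : M * M ≤ N) : #(levelPairs N M τ) ≤ 2 := by
  have hinj : Set.InjOn Prod.snd (levelPairs N M τ : Set (ℕ × ℕ)) := by
    intro p hp q hq h
    have hp := (mem_levelPairs.mp hp).2.2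
    have hq := (mem_levelPairs.mp hq).2.2
    rw [h, ← hq] at hp
    exact Prod.ext (Nat.strictMono_mul_add_one.injective (Nat.add_right_cancel hp)) h
  rw [← Finset.card_image_of_injOn hinj]
  refine card_le_two_of_lt_two_mul_sub
    (forall_mem_image.mpr fun p hp ↦ (mem_levelPairs.mp hp).2.1) ?_
  simp only [forall_mem_image]
  intro p hp q hq hpq
  obtain ⟨-, -, hpτ⟩ := mem_levelPairs.mp hp
  obtain ⟨⟨hq₁, -⟩, ⟨-, hq₂⟩, hqτ⟩ := mem_levelPairs.mp hq
  exact lt_two_mul_sub_of_pronic_add_pronic_eq hMN hq₁ hq₂ (hpτ.trans hqτ.symm) hpq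

theorem four_mul_add_two_le_of_mem_levelPairs {N M τ : ℕ} {p : ℕ × ℕ} (hp : p ∈ levelPairs N M τ)
    (hNM : N < M * M) : 4 * τ + 2 ≤ (3 * M) ^ 4 := by
  obtain ⟨⟨-, hn⟩, ⟨-, hm⟩, rfl⟩ := mem_levelPairs.mp hp
  have : 2 * p.1 + 1 ≤ 4 * (M * M) := by omega
  have : 2 * p.2 + 1 ≤ 4 * (M * M) := by nlinarith
  nlinarith

theorem stmt_6 :
    ∀ ε : ℝ, 0 < ε → ∃ C : ℝ, 0 < C ∧
      ∀ N M τ : ℕ, 1 ≤ M → M ≤ N →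
        (((Finset.Ico N (2 * N) ×ˢ Finset.Ico M (2 * M)).filter
            (fun p : ℕ × ℕ => p.1 * (p.1 + 1) + p.2 * (p.2 + 1) = τ)).card : ℝ)
          ≤ C * (M : ℝ) ^ ε := by
  intro ε hε
  obtain ⟨C, hC, hdiv⟩ := Nat.sq_card_divisors_le_mul_rpow (δ := ε / 4) (by positivity)
  refine ⟨2 + C * 3 ^ ε, by positivity, fun N M τ hM _ ↦ ?_⟩
  change (#(levelPairs N M τ) : ℝ) ≤ _
  have hMε : 1 ≤ (M : ℝ) ^ ε := one_le_rpow (by exact_mod_cast hM) hε.le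
  have hC3 : 0 ≤ C * 3 ^ ε := by positivity
  rcases le_or_gt (M * M) N with hMN | hNM
  · calc (#(levelPairs N M τ) : ℝ) ≤ 2 := by exact_mod_cast card_levelPairs_le_two hMN
      _ ≤ (2 + C * 3 ^ ε) * M ^ ε := by nlinarith
  obtain hempty | ⟨p, hp⟩ := (levelPairs N M τ).eq_empty_or_nonempty
  · rw [hempty, card_empty, Nat.cast_zero]
    positivity
  have hτ : (4 * τ + 2 : ℝ) ≤ (3 * M) ^ 4 := by
    exact_mod_cast four_mul_add_two_le_of_mem_levelPairs hp hNM
  calc (#(levelPairs N M τ) : ℝ) ≤ #(4 * τ + 2).divisors ^ 2 := by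
        exact_mod_cast card_le_sq_card_divisors_of_pronic_add_pronic_eq
          fun q hq ↦ (mem_levelPairs.mp hq).2.2
    _ ≤ C * (4 * τ + 2 : ℝ) ^ (ε / 4) := by exact_mod_cast hdiv _ (by omega)
    _ ≤ C * ((3 * M : ℝ) ^ 4) ^ (ε / 4) := by gcongr
    _ = C * 3 ^ ε * M ^ ε := by
        rw [← rpow_natCast_mul (by positivity), Nat.cast_ofNat, mul_div_cancel₀ _ four_ne_zero,
          mul_rpow zero_le_three (Nat.cast_nonneg M), mul_assoc]
    _ ≤ (2 + C * 3 ^ ε) * M ^ ε := by nlinarith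
end

section
/- Let d ≥ 2 be an integer, let 𝕊^d denote the unit sphere in ℝ^{d+1} with its surface measure σ, and let f : 𝕊^d → ℝ be continuous. For θ ∈ (0, π] and x ∈ 𝕊^d, let T_θ f(x) denote the average of f(cos θ · x + sin θ · u) over u ranging in the unit sphere of the orthogonal complement of x in ℝ^{d+1} (with respect to its surface measure). Let E := {(x, f(x)) : x ∈ 𝕊^d} ⊂ ℝ^{d+1} × ℝ be the graph of f, and let 𝒩(E, θ) denote the minimal number of metric balls of radius θ (in the Euclidean metric of ℝ^{d+2}) needed to cover E. Then there is a constant C > 0, depending only on d, such that ∫_{𝕊^d} |T_θ f(x) − f(x)| dσ(x) ≤ C θ^{d+1} 𝒩(E, θ) for all θ ∈ (0, π]. -/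
open MeasureTheory Metric
open scoped ENNReal

/-- The minimal number of closed metric balls of radius `r` needed to cover `E`
(`⊤` if no finite cover exists). -/
noncomputable def coverNum {α : Type*} [PseudoMetricSpace α] (E : Set α) (r : ℝ) : ℕ∞ :=
  ⨅ (s : Finset α) (_ : E ⊆ ⋃ y ∈ s, Metric.closedBall y r), (s.card : ℕ∞)

/-- For `x` on the unit sphere of `ℝ^{d+1}` and `u` a unit vector of the orthogonal
complement of `x`, the point `cos θ • x + sin θ • u` of the unit sphere. -/
noncomputable def spherePt {d : ℕ} (θ : ℝ) (x : sphere (0 : EuclideanSpace ℝ (Fin (d + 1))) 1)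
    (u : sphere (0 : ((ℝ ∙ (x : EuclideanSpace ℝ (Fin (d + 1))))ᗮ :
        Submodule ℝ (EuclideanSpace ℝ (Fin (d + 1))))) 1) :
    sphere (0 : EuclideanSpace ℝ (Fin (d + 1))) 1 :=
  ⟨Real.cos θ • (x : EuclideanSpace ℝ (Fin (d + 1))) +
      Real.sin θ • ((u : ((ℝ ∙ (x : EuclideanSpace ℝ (Fin (d + 1))))ᗮ :
        Submodule ℝ (EuclideanSpace ℝ (Fin (d + 1))))) : EuclideanSpace ℝ (Fin (d + 1))), by
    have hx : ‖(x : EuclideanSpace ℝ (Fin (d + 1)))‖ = 1 := norm_eq_of_mem_sphere x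
    have hu' : ‖(u : ((ℝ ∙ (x : EuclideanSpace ℝ (Fin (d + 1))))ᗮ :
        Submodule ℝ (EuclideanSpace ℝ (Fin (d + 1)))))‖ = 1 := norm_eq_of_mem_sphere u
    have hu : ‖((u : ((ℝ ∙ (x : EuclideanSpace ℝ (Fin (d + 1))))ᗮ :
        Submodule ℝ (EuclideanSpace ℝ (Fin (d + 1))))) : EuclideanSpace ℝ (Fin (d + 1)))‖ = 1 := by
      exact hu'
    have horth : inner (𝕜 := ℝ) (x : EuclideanSpace ℝ (Fin (d + 1)))
        ((u : ((ℝ ∙ (x : EuclideanSpace ℝ (Fin (d + 1))))ᗮ :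
          Submodule ℝ (EuclideanSpace ℝ (Fin (d + 1))))) : EuclideanSpace ℝ (Fin (d + 1))) = 0 := by
      have := (u : ((ℝ ∙ (x : EuclideanSpace ℝ (Fin (d + 1))))ᗮ :
          Submodule ℝ (EuclideanSpace ℝ (Fin (d + 1))))).2
      exact (Submodule.mem_orthogonal _ _).1 this _ (Submodule.mem_span_singleton_self _)
    rw [mem_sphere_zero_iff_norm]
    have hsq : ‖Real.cos θ • (x : EuclideanSpace ℝ (Fin (d + 1))) +
        Real.sin θ • ((u : ((ℝ ∙ (x : EuclideanSpace ℝ (Fin (d + 1))))ᗮ :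
          Submodule ℝ (EuclideanSpace ℝ (Fin (d + 1))))) : EuclideanSpace ℝ (Fin (d + 1)))‖ ^ 2
        = 1 := by
      rw [norm_add_sq_real]
      rw [norm_smul, norm_smul, inner_smul_left, inner_smul_right, horth]
      simp only [hx, hu, Real.norm_eq_abs, mul_one, mul_zero, zero_mul]
      nlinarith [Real.sin_sq_add_cos_sq θ, abs_mul_abs_self (Real.cos θ),
        abs_mul_abs_self (Real.sin θ)]
    nlinarith [norm_nonneg (Real.cos θ • (x : EuclideanSpace ℝ (Fin (d + 1))) +
      Real.sin θ • ((u : ((ℝ ∙ (x : EuclideanSpace ℝ (Fin (d + 1))))ᗮ :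
        Submodule ℝ (EuclideanSpace ℝ (Fin (d + 1))))) : EuclideanSpace ℝ (Fin (d + 1)))), hsq]⟩

/-- The spherical average-shift operator: `Tshift θ f x` is the average of `f` over all
points of the sphere at geodesic distance `θ` from `x`, i.e. the average of
`f (cos θ • x + sin θ • u)` over `u` in the unit sphere of the orthogonal complement of `x`,
with respect to its surface measure. -/
noncomputable def Tshift {d : ℕ} (θ : ℝ)
    (f : sphere (0 : EuclideanSpace ℝ (Fin (d + 1))) 1 → ℝ)
    (x : sphere (0 : EuclideanSpace ℝ (Fin (d + 1))) 1) : ℝ :=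
  ⨍ u : sphere (0 : ((ℝ ∙ (x : EuclideanSpace ℝ (Fin (d + 1))))ᗮ :
      Submodule ℝ (EuclideanSpace ℝ (Fin (d + 1))))) 1,
    f (spherePt θ x u) ∂(Measure.toSphere volume)

/-! Fix a cover of the graph of `f` by balls of radius `θ`. The great-circle arc of length `θ`
from `x` to a point `y` at angle `θ` lifts to a connected piece of the graph, so the values of `f`
along the arc fill the interval between `f x` and `f y`; this interval is covered by the projections
of the balls meeting the lift, each of length at most `2θ`, and their centres lie over points within
`2θ` of `x`. Hence `|f y - f x| ≤ 2θ · N(x)`, with `N(x)` the number of such centres, and averaging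
over `y` gives the same bound for `|T_θ f x - f x|`. Integrating `N` over the sphere yields a sum
over the centres of areas of caps of radius `2θ`, each `O(θ^d)` because the cone over a cap of
radius `r` is covered by about `1/r` balls of radius `2r`. -/

open Set
open scoped Finset

theorem le_mul_coverNum {α : Type*} [PseudoMetricSpace α] {A : Set α} {r : ℝ} {a b : ℝ≥0∞}
    (hb : b ≠ 0) (h : ∀ s : Finset α, A ⊆ ⋃ y ∈ s, closedBall y r → a ≤ b * #s) :
    a ≤ b * coverNum A r := by
  rw [coverNum, iInf_subtype']
  cases isEmpty_or_nonempty {s : Finset α // A ⊆ ⋃ y ∈ s, closedBall y r}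
  · simp [ENNReal.mul_top hb]
  · obtain ⟨s, hs⟩ := ENat.exists_eq_iInf fun s : {s : Finset α // A ⊆ ⋃ y ∈ s, closedBall y r} =>
      (#s.1 : ℕ∞)
    rw [← hs]
    simpa using h s.1 s.2

theorem IsPreconnected.abs_sub_le_of_subset_biUnion_closedBall {α : Type*} [PseudoMetricSpace α]
    {K : Set α} (hK : IsPreconnected K) {g : α → ℝ} (hg : LipschitzWith 1 g) {t : Finset α}
    {r : ℝ} (hKt : K ⊆ ⋃ c ∈ t, closedBall c r) {p q : α} (hp : p ∈ K) (hq : q ∈ K) :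
    |g p - g q| ≤ 2 * r * #t := by
  have hr : 0 ≤ r := by
    obtain ⟨c, -, hc⟩ := mem_iUnion₂.1 (hKt hp)
    exact dist_nonneg.trans hc
  have hcover : uIcc (g q) (g p) ⊆ ⋃ c ∈ t, closedBall (g c) r := by
    refine ((hK.image g hg.continuous.continuousOn).ordConnected.uIcc_subset
      (mem_image_of_mem g hq) (mem_image_of_mem g hp)).trans ?_
    rintro _ ⟨z, hz, rfl⟩
    obtain ⟨c, hc, hzc⟩ := mem_iUnion₂.1 (hKt hz)
    exact mem_iUnion₂.2 ⟨c, hc, by simpa using hg.mapsTo_closedBall c r hzc⟩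
  have : ENNReal.ofReal |g p - g q| ≤ ENNReal.ofReal (2 * r * #t) := calc
    ENNReal.ofReal |g p - g q| = volume (uIcc (g q) (g p)) := Real.volume_interval.symm
    _ ≤ ∑ c ∈ t, volume (closedBall (g c) r) :=
      (measure_mono hcover).trans (measure_biUnion_finset_le _ _)
    _ = ENNReal.ofReal (2 * r * #t) := by
      simp [Real.volume_closedBall, mul_comm]
  exact (ENNReal.ofReal_le_ofReal_iff (by positivity)).1 this

theorem lintegral_card_filter {X ι : Type*} [MeasurableSpace X] (μ : Measure X)
    (P : ι → X → Prop) [∀ i x, Decidable (P i x)] (hP : ∀ i, MeasurableSet {x | P i x})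
    (s : Finset ι) :
    ∫⁻ x, (#{i ∈ s | P i x} : ℝ≥0∞) ∂μ = ∑ i ∈ s, μ {x | P i x} := by
  have hcard (x : X) : (#{i ∈ s | P i x} : ℝ≥0∞) = ∑ i ∈ s, {x | P i x}.indicator 1 x := by
    rw [Finset.card_filter]
    push_cast
    simp [Set.indicator_apply]
  simp_rw [hcard]
  rw [lintegral_finsetSum s (f := fun i => {x | P i x}.indicator 1) fun i _ =>
    measurable_const.indicator (hP i)]
  simp [lintegral_indicator_one (hP _)]

section Cap
open scoped Pointwise
variable {E : Type*} [NormedAddCommGroup E] [NormedSpace ℝ E]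

theorem Ioo_smul_closedBall_subset (x₀ : sphere (0 : E) 1) {r : ℝ} (hr : 0 < r) :
    Ioo (0 : ℝ) 1 • ((↑) '' closedBall x₀ r : Set E) ⊆
      ⋃ k ∈ Finset.range (⌊1 / r⌋₊ + 1), closedBall (((k : ℝ) * r) • (x₀ : E)) (2 * r) := by
  rintro _ ⟨t, ht, _, ⟨y, hy, rfl⟩, rfl⟩
  set k := ⌊t / r⌋₊
  have hkt : k * r ≤ t := (le_div_iff₀ hr).1 (Nat.floor_le (div_nonneg ht.1.le hr.le))
  have htk : t < (k + 1) * r := (div_lt_iff₀ hr).1 (Nat.lt_floor_add_one _)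
  have hk : k < ⌊1 / r⌋₊ + 1 :=
    Nat.lt_succ_of_le (Nat.floor_le_floor (div_le_div_of_nonneg_right ht.2.le hr.le))
  refine mem_iUnion₂.2 ⟨k, Finset.mem_range.2 hk, ?_⟩
  rw [mem_closedBall]
  calc dist (t • (y : E)) ((k * r) • (x₀ : E))
      ≤ dist (t • (y : E)) (t • (x₀ : E)) + dist (t • (x₀ : E)) ((k * r) • (x₀ : E)) :=
        dist_triangle _ _ _
    _ = t * dist y x₀ + (t - k * r) := by
        rw [dist_smul₀, dist_eq_norm (t • _), ← sub_smul, norm_smul, norm_eq_of_mem_sphere x₀,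
          Real.norm_of_nonneg ht.1.le, Real.norm_of_nonneg (by linarith), mul_one, Subtype.dist_eq]
    _ ≤ 1 * r + r := by
        gcongr
        · exact ht.2.le
        · exact hy
        · linarith
    _ = 2 * r := by ring

variable [MeasurableSpace E] [BorelSpace E] [FiniteDimensional ℝ E] (μ : Measure E)
  [μ.IsAddHaarMeasure]

theorem toSphere_closedBall_le {n : ℕ} (hn : Module.finrank ℝ E = n + 1) (x₀ : sphere (0 : E) 1)
    {r : ℝ} (hr : 0 < r) :
    μ.toSphere (closedBall x₀ r) ≤
      ENNReal.ofReal ((n + 1) * 2 ^ (n + 1) * (1 + r) * r ^ n) * μ (ball 0 1) := by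
  set m := ⌊1 / r⌋₊
  have hmr : m * r ≤ 1 := (le_div_iff₀ hr).1 (Nat.floor_le (by positivity))
  have hcount : ((n + 1 : ℕ) : ℝ≥0∞) * ((m + 1 : ℕ) * ENNReal.ofReal ((2 * r) ^ (n + 1))) ≤
      ENNReal.ofReal ((n + 1) * 2 ^ (n + 1) * (1 + r) * r ^ n) := by
    rw [← ENNReal.ofReal_natCast, ← ENNReal.ofReal_natCast, ← ENNReal.ofReal_mul (by positivity),
      ← ENNReal.ofReal_mul (by positivity)]
    refine ENNReal.ofReal_le_ofReal ?_
    push_cast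
    have : ((m : ℝ) + 1) * r ≤ 1 + r := by linarith
    calc ((n : ℝ) + 1) * ((m + 1) * (2 * r) ^ (n + 1))
        = (n + 1) * 2 ^ (n + 1) * ((m + 1) * r) * r ^ n := by ring
      _ ≤ (n + 1) * 2 ^ (n + 1) * (1 + r) * r ^ n := by gcongr
  calc μ.toSphere (closedBall x₀ r)
      = (n + 1 : ℕ) * μ (Ioo (0 : ℝ) 1 • ((↑) '' closedBall x₀ r : Set E)) := by
        rw [μ.toSphere_apply' measurableSet_closedBall, hn]
    _ ≤ (n + 1 : ℕ) *
          ∑ k ∈ Finset.range (m + 1), μ (closedBall (((k : ℝ) * r) • (x₀ : E)) (2 * r)) := by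
        gcongr
        exact (measure_mono (Ioo_smul_closedBall_subset x₀ hr)).trans
          (measure_biUnion_finset_le _ _)
    _ = (n + 1 : ℕ) * ((m + 1 : ℕ) * ENNReal.ofReal ((2 * r) ^ (n + 1))) * μ (ball 0 1) := by
        simp [μ.addHaar_closedBall _ (by positivity : 0 ≤ 2 * r), hn, mul_assoc]
    _ ≤ ENNReal.ofReal ((n + 1) * 2 ^ (n + 1) * (1 + r) * r ^ n) * μ (ball 0 1) := by gcongr

theorem toSphere_setOf_dist_le_le {n : ℕ} (hn : Module.finrank ℝ E = n + 1) (p : E) {R : ℝ}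
    (hR : 0 < R) :
    μ.toSphere {x | dist (x : E) p ≤ R} ≤
      ENNReal.ofReal ((n + 1) * 2 ^ (n + 1) * (1 + 2 * R) * (2 * R) ^ n * μ.real (ball 0 1)) := by
  rcases {x : sphere (0 : E) 1 | dist (x : E) p ≤ R}.eq_empty_or_nonempty with h | ⟨x₀, hx₀⟩
  · simp [h]
  rw [ENNReal.ofReal_mul (by positivity), ofReal_measureReal measure_ball_lt_top.ne]
  calc μ.toSphere {x | dist (x : E) p ≤ R} ≤ μ.toSphere (closedBall x₀ (2 * R)) := by
        refine measure_mono fun z (hz : dist (z : E) p ≤ R) => ?_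
        rw [mem_closedBall, Subtype.dist_eq]
        linarith [dist_triangle_right (z : E) x₀ p, show dist (x₀ : E) p ≤ R from hx₀]
    _ ≤ _ := toSphere_closedBall_le μ hn x₀ (by positivity)

end Cap

section Sphere
variable {d : ℕ}
local notation "𝔼" => EuclideanSpace ℝ (Fin (d + 1))
local notation "𝕊" => sphere (0 : EuclideanSpace ℝ (Fin (d + 1))) 1

theorem coe_spherePt (θ : ℝ) (x : 𝕊) (u : sphere (0 : (ℝ ∙ (x : 𝔼))ᗮ) 1) :
    (spherePt θ x u : 𝔼) = Real.cos θ • (x : 𝔼) + Real.sin θ • ((u : (ℝ ∙ (x : 𝔼))ᗮ) : 𝔼) :=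
  rfl

theorem spherePt_zero (x : 𝕊) (u : sphere (0 : (ℝ ∙ (x : 𝔼))ᗮ) 1) : spherePt 0 x u = x :=
  Subtype.ext (by simp [coe_spherePt])

theorem continuous_spherePt_angle (x : 𝕊) (u : sphere (0 : (ℝ ∙ (x : 𝔼))ᗮ) 1) :
    Continuous fun θ => spherePt θ x u :=
  ((Real.continuous_cos.smul continuous_const).add
    (Real.continuous_sin.smul continuous_const)).subtype_mk _

theorem continuous_spherePt (θ : ℝ) (x : 𝕊) : Continuous (spherePt θ x) :=
  (continuous_const.add ((continuous_subtype_val.comp continuous_subtype_val).const_smul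
    (Real.sin θ))).subtype_mk _

theorem dist_spherePt_le (x : 𝕊) (u : sphere (0 : (ℝ ∙ (x : 𝔼))ᗮ) 1) {θ : ℝ} (hθ : 0 ≤ θ) :
    dist (spherePt θ x u) x ≤ θ := by
  have hx : ‖(x : 𝔼)‖ = 1 := norm_eq_of_mem_sphere x
  have hu : ‖((u : (ℝ ∙ (x : 𝔼))ᗮ) : 𝔼)‖ = 1 := norm_eq_of_mem_sphere u
  have horth :
      inner ℝ ((Real.cos θ - 1) • (x : 𝔼)) (Real.sin θ • ((u : (ℝ ∙ (x : 𝔼))ᗮ) : 𝔼)) = 0 := by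
    rw [inner_smul_left, inner_smul_right,
      Submodule.mem_orthogonal_singleton_iff_inner_right.1 (u : (ℝ ∙ (x : 𝔼))ᗮ).2]
    simp
  have hchord : dist (spherePt θ x u) x ^ 2 = 2 - 2 * Real.cos θ := by
    rw [Subtype.dist_eq, dist_eq_norm, coe_spherePt,
      show ∀ a b : 𝔼, Real.cos θ • a + b - a = (Real.cos θ - 1) • a + b by
        intro a b; rw [sub_smul, one_smul]; abel,
      norm_add_sq_real, horth, norm_smul, norm_smul, hx, hu]
    simp only [Real.norm_eq_abs, mul_one, sq_abs]
    nlinarith [Real.sin_sq_add_cos_sq θ]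
  have := Real.one_sub_sq_div_two_le_cos (x := θ)
  exact (pow_le_pow_iff_left₀ dist_nonneg hθ two_ne_zero).1 (by linarith)

def sphereGraph (f : 𝕊 → ℝ) : Set (WithLp 2 (𝔼 × ℝ)) :=
  {p | ∃ x : 𝕊, p = (WithLp.equiv 2 (𝔼 × ℝ)).symm ((x : 𝔼), f x)}

theorem abs_sub_le_of_sphereGraph_subset (f : 𝕊 → ℝ) (hf : Continuous f)
    {s : Finset (WithLp 2 (𝔼 × ℝ))} {r : ℝ} (hs : sphereGraph f ⊆ ⋃ c ∈ s, closedBall c r)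
    {A : Set 𝕊} (hA : IsPreconnected A) {x y : 𝕊} (hx : x ∈ A) (hy : y ∈ A) {ρ : ℝ}
    (hAx : ∀ z ∈ A, dist z x ≤ ρ) :
    |f y - f x| ≤ 2 * r * #{c ∈ s | dist (x : 𝔼) c.ofLp.1 ≤ ρ + r} := by
  set graph : 𝕊 → WithLp 2 (𝔼 × ℝ) := fun z => WithLp.toLp 2 ((z : 𝔼), f z)
  have hgraph : Continuous graph :=
    (WithLp.prod_continuous_toLp 2 _ _).comp (continuous_subtype_val.prodMk hf)
  have hsnd : LipschitzWith 1 fun p : WithLp 2 (𝔼 × ℝ) => p.ofLp.2 :=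
    LipschitzWith.of_dist_le_mul fun p q => by simpa using WithLp.dist_snd_le p q
  refine (hA.image graph hgraph.continuousOn).abs_sub_le_of_subset_biUnion_closedBall hsnd ?_
    (mem_image_of_mem graph hy) (mem_image_of_mem graph hx)
  rintro _ ⟨z, hz, rfl⟩
  obtain ⟨c, hc, hzc⟩ := mem_iUnion₂.1 (hs ⟨z, rfl⟩)
  refine mem_iUnion₂.2 ⟨c, Finset.mem_filter.2 ⟨hc, ?_⟩, hzc⟩
  calc dist (x : 𝔼) c.ofLp.1 ≤ dist (x : 𝔼) z + dist (z : 𝔼) c.ofLp.1 := dist_triangle _ _ _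
    _ ≤ ρ + r := add_le_add (by rw [dist_comm]; exact hAx z hz)
        ((WithLp.dist_fst_le (graph z) c).trans hzc)

theorem abs_Tshift_sub_le (hd : d ≠ 0) (f : 𝕊 → ℝ) (hf : Continuous f) {θ : ℝ} (hθ : 0 ≤ θ)
    {s : Finset (WithLp 2 (𝔼 × ℝ))} (hs : sphereGraph f ⊆ ⋃ c ∈ s, closedBall c θ) (x : 𝕊) :
    |Tshift θ f x - f x| ≤ 2 * θ * #{c ∈ s | dist (x : 𝔼) c.ofLp.1 ≤ 2 * θ} := by
  have hshift (u : sphere (0 : (ℝ ∙ (x : 𝔼))ᗮ) 1) :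
      |f (spherePt θ x u) - f x| ≤ 2 * θ * #{c ∈ s | dist (x : 𝔼) c.ofLp.1 ≤ 2 * θ} := by
    have harc := abs_sub_le_of_sphereGraph_subset f hf hs (ρ := θ)
      (isPreconnected_Icc.image _ (continuous_spherePt_angle x u).continuousOn)
      ⟨0, left_mem_Icc.2 hθ, spherePt_zero x u⟩ ⟨θ, right_mem_Icc.2 hθ, rfl⟩
      (by rintro _ ⟨t, ht, rfl⟩; exact (dist_spherePt_le x u ht.1).trans ht.2)
    rwa [← two_mul] at harc
  have : Fact (Module.finrank ℝ 𝔼 = d + 1) := ⟨finrank_euclideanSpace_fin⟩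
  have : Nontrivial (ℝ ∙ (x : 𝔼))ᗮ := Module.nontrivial_of_finrank_pos (R := ℝ) <| by
    rw [Submodule.finrank_orthogonal_span_singleton (n := d) (ne_zero_of_mem_unit_sphere x)]
    exact Nat.pos_of_ne_zero hd
  have : NeZero (Measure.toSphere (volume : Measure (ℝ ∙ (x : 𝔼))ᗮ)) :=
    ⟨Measure.toSphere_ne_zero _⟩
  have hint := (hf.comp (continuous_spherePt θ x)).integrable_of_hasCompactSupport
    (HasCompactSupport.of_compactSpace _) (μ := Measure.toSphere volume)
  simpa [Tshift, Real.dist_eq] using (convex_closedBall (f x) _).average_mem isClosed_closedBall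
    (ae_of_all _ fun u => by simpa [Real.dist_eq] using hshift u) hint

theorem lintegral_enorm_Tshift_sub_le (hd : d ≠ 0) (f : 𝕊 → ℝ) (hf : Continuous f) {θ : ℝ}
    (hθ : 0 ≤ θ) {s : Finset (WithLp 2 (𝔼 × ℝ))}
    (hs : sphereGraph f ⊆ ⋃ c ∈ s, closedBall c θ) :
    ∫⁻ x, ‖Tshift θ f x - f x‖ₑ ∂(Measure.toSphere volume) ≤
      ENNReal.ofReal (2 * θ) *
        ∑ c ∈ s, Measure.toSphere volume {x : 𝕊 | dist (x : 𝔼) c.ofLp.1 ≤ 2 * θ} := by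
  rw [← lintegral_card_filter _ _ fun c => (isClosed_le
    (continuous_subtype_val.dist continuous_const) continuous_const).measurableSet,
    ← lintegral_const_mul' _ _ ENNReal.ofReal_ne_top]
  refine lintegral_mono fun x => ?_
  rw [Real.enorm_eq_ofReal_abs, ← ENNReal.ofReal_natCast, ← ENNReal.ofReal_mul (by positivity)]
  exact ENNReal.ofReal_le_ofReal (abs_Tshift_sub_le hd f hf hθ hs x)

end Sphere

theorem stmt_12 (d : ℕ) (hd : 2 ≤ d) :
    ∃ C : ℝ, 0 < C ∧
      ∀ f : sphere (0 : EuclideanSpace ℝ (Fin (d + 1))) 1 → ℝ, Continuous f →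
        ∀ θ : ℝ, 0 < θ → θ ≤ Real.pi →
          ENNReal.ofReal (∫ x, |Tshift θ f x - f x|
              ∂(Measure.toSphere (volume : Measure (EuclideanSpace ℝ (Fin (d + 1))))))
            ≤ ENNReal.ofReal (C * θ ^ (d + 1)) *
              (coverNum
                {p : WithLp 2 (EuclideanSpace ℝ (Fin (d + 1)) × ℝ) |
                  ∃ x : sphere (0 : EuclideanSpace ℝ (Fin (d + 1))) 1,
                    p = (WithLp.equiv 2 (EuclideanSpace ℝ (Fin (d + 1)) × ℝ)).symm
                      ((x : EuclideanSpace ℝ (Fin (d + 1))), f x)} θ : ℝ≥0∞) := by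
  set V := volume.real (ball (0 : EuclideanSpace ℝ (Fin (d + 1))) 1)
  have hV : 0 < V :=
    ENNReal.toReal_pos (measure_ball_pos _ _ one_pos).ne' measure_ball_lt_top.ne
  refine ⟨2 * ((d + 1) * 2 ^ (d + 1) * (1 + 4 * Real.pi) * 4 ^ d) * V, by positivity, ?_⟩
  intro f hf θ hθ hθπ
  refine le_mul_coverNum (by simp; positivity) fun s hs => ?_
  set σ := Measure.toSphere (volume : Measure (EuclideanSpace ℝ (Fin (d + 1))))
  set K := (d + 1) * 2 ^ (d + 1) * (1 + 2 * (2 * θ)) * (2 * (2 * θ)) ^ d * V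
  calc ENNReal.ofReal (∫ x, |Tshift θ f x - f x| ∂σ) ≤ ∫⁻ x, ‖Tshift θ f x - f x‖ₑ ∂σ := by
        rw [← Real.enorm_eq_ofReal (integral_nonneg fun x => abs_nonneg _)]
        simpa using enorm_integral_le_lintegral_enorm (μ := σ) fun x => |Tshift θ f x - f x|
    _ ≤ ENNReal.ofReal (2 * θ) * ∑ _c ∈ s, ENNReal.ofReal K := by
        grw [lintegral_enorm_Tshift_sub_le (by omega) f hf hθ.le hs]
        gcongr
        exact toSphere_setOf_dist_le_le volume finrank_euclideanSpace_fin _ (by positivity)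
    _ = ENNReal.ofReal (2 * θ * K) * #s := by
        rw [Finset.sum_const, nsmul_eq_mul, ENNReal.ofReal_mul (by positivity : (0 : ℝ) ≤ 2 * θ)]
        ring
    _ ≤ _ := by
        gcongr ?_ * _
        refine ENNReal.ofReal_le_ofReal ?_
        calc 2 * θ * K = 2 * ((d + 1) * 2 ^ (d + 1) * (1 + 4 * θ) * 4 ^ d) * V * θ ^ (d + 1) := by
              ring
          _ ≤ _ := by gcongr
end
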